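/- arXiv:1406.4021 — 2 statements merged into one kernel-verified Lean document; each statement's English description precedes it below -/
import Mathlib

section
/- Let (P, μ) be a σ-finite measure space, Y a separable metric Baire space, and (y_i)_{i∈ℕ} a dense sequence in Y. Suppose ε : ℕ × ℕ × P → ℝ is measurable with ε(i,k,ψ) > 0 for all i, k, ψ. For each ψ ∈ P define A_ψ = ⋂_{k∈ℕ} ⋃_{i∈ℕ} B_{ε(i,k,ψ)}(y_i). Then the set A = { y ∈ Y : μ({ψ ∈ P : y ∉ A_ψ}) = 0 } is residual in Y. -/
open MeasureTheory Metric ENNReal Set Filter Topology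

/-!
For fixed `k`, the set of parameters `ψ` whose balls `B_{ε(i,k,ψ)}(y_i)` all miss `x` depends
upper semicontinuously on `x`, so after replacing `μ` by an equivalent finite measure its measure
is an upper semicontinuous function of `x`. The zero set of a nonnegative upper semicontinuous
function is a `G_δ`, and here it contains every `y_i`, hence is dense. The exceptional set of
`x` is the countable union over `k` of these parameter sets.
-/

theorem UpperSemicontinuous.isGδ_setOf_eq_zero {X : Type*} [TopologicalSpace X]
    {f : X → ℝ≥0∞} (hf : UpperSemicontinuous f) : IsGδ {x | f x = 0} := by
  have hzero : {x | f x = 0} = ⋂ n : ℕ, f ⁻¹' Iio (n : ℝ≥0∞)⁻¹ := by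
    ext x
    simp only [mem_ofPred_eq, mem_iInter, mem_preimage, mem_Iio]
    refine ⟨fun hx n => by simp [hx], fun hx => ?_⟩
    by_contra hne
    obtain ⟨n, hn⟩ := ENNReal.exists_inv_nat_lt hne
    exact (hx n).not_gt hn
  rw [hzero]
  exact .iInter_of_isOpen fun n => hf.isOpen_preimage _

section Uncovered

variable {P Y ι : Type*} [PseudoMetricSpace Y]

def uncovered (y : ι → Y) (ε : ι → P → ℝ) (x : Y) : Set P :=
  {ψ | ∀ i, ε i ψ ≤ dist x (y i)}

theorem measurableSet_uncovered [MeasurableSpace P] [Countable ι] {ε : ι → P → ℝ}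
    (hε : ∀ i, Measurable (ε i)) (y : ι → Y) (x : Y) : MeasurableSet (uncovered y ε x) := by
  simp only [uncovered, ofPred_forall]
  exact .iInter fun i => measurableSet_le (hε i) measurable_const

theorem uncovered_apply_eq_empty {y : ι → Y} {ε : ι → P → ℝ} {i : ι}
    (hpos : ∀ ψ, 0 < ε i ψ) : uncovered y ε (y i) = ∅ :=
  eq_empty_of_forall_notMem fun ψ hψ => (hpos ψ).not_ge (by simpa using hψ i)

theorem uncovered_subset_of_dist_le {y : ι → Y} {ε : ι → P → ℝ} {x x₀ : Y} {r : ℝ}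
    (h : dist x x₀ ≤ r) : uncovered y ε x ⊆ uncovered y (fun i ψ => ε i ψ - r) x₀ :=
  fun ψ hψ i => by linarith [hψ i, dist_triangle x x₀ (y i)]

theorem biInter_uncovered_sub (y : ι → Y) (ε : ι → P → ℝ) (x : Y) :
    ⋂ r > (0 : ℝ), uncovered y (fun i ψ => ε i ψ - r) x = uncovered y ε x := by
  ext ψ
  simp only [uncovered, mem_iInter, mem_ofPred_eq, sub_le_iff_le_add]
  refine ⟨fun h i => le_of_forall_pos_le_add fun r hr => h r hr i, fun h r hr i => ?_⟩
  linarith [h i]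

theorem upperSemicontinuous_measure_uncovered [MeasurableSpace P] [Countable ι]
    (ν : Measure P) [IsFiniteMeasure ν] (y : ι → Y) {ε : ι → P → ℝ}
    (hε : ∀ i, Measurable (ε i)) :
    UpperSemicontinuous fun x => ν (uncovered y ε x) := by
  intro x₀ c hc
  have hlim : Tendsto (fun r : ℝ => ν (uncovered y (fun i ψ => ε i ψ - r) x₀)) (𝓝[>] 0)
      (𝓝 (ν (uncovered y ε x₀))) := by
    rw [← biInter_uncovered_sub]
    refine tendsto_measure_biInter_gt
      (fun r _ => (measurableSet_uncovered (fun i => (hε i).sub_const r) y x₀).nullMeasurableSet)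
      (fun r r' _ hrr' ψ hψ i => ?_) ⟨1, one_pos, measure_ne_top ν _⟩
    linarith [hψ i]
  obtain ⟨r, hr, hr_pos⟩ := ((hlim.eventually_lt_const hc).and self_mem_nhdsWithin).exists
  filter_upwards [closedBall_mem_nhds x₀ hr_pos] with x hx
  exact (measure_mono (uncovered_subset_of_dist_le hx)).trans_lt hr

theorem residual_setOf_measure_uncovered_eq_zero [MeasurableSpace P] [Countable ι]
    (μ : Measure P) [SFinite μ] {y : ι → Y} (hdense : DenseRange y) {ε : ι → P → ℝ}
    (hε : ∀ i, Measurable (ε i)) (hpos : ∀ i ψ, 0 < ε i ψ) :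
    {x | μ (uncovered y ε x) = 0} ∈ residual Y := by
  simp_rw [← toFinite_apply_eq_zero_iff (μ := μ)]
  refine residual_of_dense_Gδ
    (upperSemicontinuous_measure_uncovered μ.toFinite y hε).isGδ_setOf_eq_zero (hdense.mono ?_)
  rintro _ ⟨i, rfl⟩
  simp [uncovered_apply_eq_empty (hpos i)]

end Uncovered

theorem stmt_3_general {P : Type*} [MeasurableSpace P] (μ : Measure P) [SigmaFinite μ]
    {Y : Type*} [MetricSpace Y]
    (y : ℕ → Y) (hdense : DenseRange y)
    (ε : ℕ → ℕ → P → ℝ) (hmeas : ∀ i k, Measurable (ε i k))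
    (hpos : ∀ i k ψ, 0 < ε i k ψ) :
    {x : Y | μ {ψ : P | x ∉ ⋂ k : ℕ, ⋃ i : ℕ, ball (y i) (ε i k ψ)} = 0} ∈ residual Y := by
  have hexceptional : ∀ x, {ψ : P | x ∉ ⋂ k : ℕ, ⋃ i : ℕ, ball (y i) (ε i k ψ)} =
      ⋃ k, uncovered y (fun i => ε i k) x := fun x => by
    ext ψ
    simp [uncovered]
  simp_rw [hexceptional, measure_iUnion_null_iff, ofPred_forall]
  exact countable_iInter_mem.2 fun k =>
    residual_setOf_measure_uncovered_eq_zero μ hdense (fun i => hmeas i k) (fun i => hpos i k)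

theorem stmt_3 {P : Type*} [MeasurableSpace P] (μ : Measure P) [SigmaFinite μ]
    {Y : Type*} [MetricSpace Y] [TopologicalSpace.SeparableSpace Y] [BaireSpace Y]
    (y : ℕ → Y) (hdense : DenseRange y)
    (ε : ℕ → ℕ → P → ℝ) (hmeas : ∀ i k, Measurable (ε i k))
    (hpos : ∀ i k ψ, 0 < ε i k ψ) :
    {x : Y | μ {ψ : P | x ∉ ⋂ k : ℕ, ⋃ i : ℕ, ball (y i) (ε i k ψ)} = 0} ∈ residual Y :=
  stmt_3_general μ y hdense ε hmeas hpos
end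

section
/- Let (q_n) be a sequence of positive integers with q_n → ∞ and let N ∈ ℕ. Then for Lebesgue-almost every (x_1, …, x_N) ∈ ℝ^N, for every index i' ∈ {1, …, N} there exists a subsequence (q_{n_j}) such that the fractional part of q_{n_j} x_{i'} converges to 1/2 while for every i ≠ i' the distance of q_{n_j} x_i to the nearest integer converges to 0. -/
/-!
Fix a box `∏ (aᵢ, bᵢ) ⊆ [0, 1]^N`. As soon as `q r ≥ 2`, every ball of radius `r` meets the set of
`x` with `Int.fract (q xᵢ) ∈ (aᵢ, bᵢ)` for all `i` in at least the fixed proportion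
`∏ (bᵢ - aᵢ) / 2^N` of its volume. Since `q_n → ∞`, the set of points that eventually never land in
the box therefore has density at most `1 - ∏ (bᵢ - aᵢ) / 2^N` at every point, so by the Lebesgue
density theorem it is null. Apply this to the countably many boxes shrinking to the point with
coordinate `1/2` at `i'` and `0` elsewhere, and extract a diagonal subsequence.
-/

open Filter MeasureTheory

/-- The distance from a real number to the nearest integer. -/
noncomputable def nearestIntDist (a : ℝ) : ℝ := min (Int.fract a) (1 - Int.fract a)

open Set Metric Topology
open scoped ENNReal

section Density

variable {β : Type*} [MetricSpace β] [MeasurableSpace β] [BorelSpace β]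
  [SecondCountableTopology β] [HasBesicovitchCovering β] (μ : Measure β)

theorem measure_eq_zero_of_measure_inter_closedBall_le [IsLocallyFiniteMeasure μ] {s : Set β}
    {c : ℝ≥0∞} (hc : c < 1)
    (h : ∀ x, ∀ r > 0, μ (s ∩ closedBall x r) ≤ c * μ (closedBall x r)) : μ s = 0 := by
  have hfalse : ∀ᵐ x ∂μ.restrict s, False := by
    filter_upwards [Besicovitch.ae_tendsto_measure_inter_div μ s] with x hx
    refine hc.not_ge (le_of_tendsto hx ?_)
    exact eventually_nhdsWithin_of_forall fun r hr => ENNReal.div_le_of_le_mul (h x r hr)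
  exact Measure.restrict_eq_zero.1 (ae_eq_bot.1 (eventually_false_iff_eq_bot.1 hfalse))

theorem ae_frequently_mem_of_frequently_measure_inter_closedBall_ge [ProperSpace β]
    [IsFiniteMeasureOnCompacts μ] {A : ℕ → Set β} (hA : ∀ n, MeasurableSet (A n))
    {c : ℝ≥0∞} (hc : c ≠ 0)
    (h : ∀ x, ∀ r > 0, ∃ᶠ n in atTop, c * μ (closedBall x r) ≤ μ (A n ∩ closedBall x r)) :
    ∀ᵐ x ∂μ, ∃ᶠ n in atTop, x ∈ A n := by
  simp_rw [frequently_atTop]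
  refine ae_all_iff.2 fun m => ae_iff.2 ?_
  refine measure_eq_zero_of_measure_inter_closedBall_le μ
    (ENNReal.sub_lt_self ENNReal.one_ne_top one_ne_zero hc) fun x r hr => ?_
  obtain ⟨n, hmn, hn⟩ := (h x r hr).forall_exists_of_atTop m
  have hfin : μ (closedBall x r) ≠ ∞ := measure_closedBall_lt_top.ne
  calc μ ({y | ¬∃ n ≥ m, y ∈ A n} ∩ closedBall x r)
      ≤ μ (closedBall x r \ A n) :=
        measure_mono fun y hy => ⟨hy.2, fun hyA => hy.1 ⟨n, hmn, hyA⟩⟩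
    _ ≤ μ (closedBall x r) - c * μ (closedBall x r) := by
        have hcfin : c * μ (closedBall x r) ≠ ∞ :=
          (hn.trans_lt ((measure_mono inter_subset_right).trans_lt hfin.lt_top)).ne
        refine ENNReal.le_sub_of_add_le_right hcfin ?_
        calc μ (closedBall x r \ A n) + c * μ (closedBall x r)
            ≤ μ (closedBall x r \ A n) + μ (closedBall x r ∩ A n) := by
              rw [inter_comm]; gcongr
          _ = μ (closedBall x r) := measure_sdiff_add_inter _ (hA n)
    _ = (1 - c) * μ (closedBall x r) := by
        rw [ENNReal.sub_mul fun _ _ => hfin, one_mul]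

end Density

theorem floor_eq_of_mem_Ioo_intCast_add {a b t : ℝ} {k : ℤ} (ha : 0 ≤ a) (hb : b ≤ 1)
    (ht : t ∈ Ioo (k + a) (k + b)) : ⌊t⌋ = k :=
  Int.floor_eq_iff.2 ⟨by linarith [ht.1], by linarith [ht.2]⟩

theorem le_volume_fract_mem_Ioo_inter_Icc {a b : ℝ} (ha : 0 ≤ a) (hb : b ≤ 1) (hab : a ≤ b)
    (u v : ℝ) :
    ENNReal.ofReal ((b - a) * (v - u - 2)) ≤ volume ({t | Int.fract t ∈ Ioo a b} ∩ Icc u v) := by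
  set I : ℤ → Set ℝ := fun k => Ioo (k + a) (k + b)
  set S := Finset.Ico ⌈u⌉ ⌊v⌋
  have hsub : ⋃ k ∈ S, I k ⊆ {t | Int.fract t ∈ Ioo a b} ∩ Icc u v := by
    simp only [iUnion_subset_iff]
    intro k hk t ht
    have hK : (⌈u⌉ : ℝ) ≤ k := by exact_mod_cast (Finset.mem_Ico.1 hk).1
    have hL : (k : ℝ) + 1 ≤ ⌊v⌋ := by exact_mod_cast (Finset.mem_Ico.1 hk).2
    have hfract : Int.fract t = t - k := by
      rw [Int.fract, floor_eq_of_mem_Ioo_intCast_add ha hb ht]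
    refine ⟨⟨?_, ?_⟩, ?_, ?_⟩
    · linarith [ht.1]
    · linarith [ht.2]
    · linarith [Int.le_ceil u, ht.1]
    · linarith [Int.floor_le v, ht.2]
  have hdisj : (S : Set ℤ).PairwiseDisjoint I := fun k _ l _ hkl =>
    disjoint_left.2 fun t htk htl => hkl <|
      (floor_eq_of_mem_Ioo_intCast_add ha hb htk).symm.trans
        (floor_eq_of_mem_Ioo_intCast_add ha hb htl)
  have hcard : v - u - 2 ≤ S.card := by
    rw [Int.card_Ico]
    have : ((⌊v⌋ - ⌈u⌉ : ℤ) : ℝ) ≤ (⌊v⌋ - ⌈u⌉).toNat := by exact_mod_cast Int.self_le_toNat _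
    push_cast at this
    linarith [Int.ceil_lt_add_one u, Int.sub_one_lt_floor v]
  calc ENNReal.ofReal ((b - a) * (v - u - 2))
      ≤ ENNReal.ofReal (S.card * (b - a)) := by
        apply ENNReal.ofReal_le_ofReal
        rw [mul_comm]
        exact mul_le_mul_of_nonneg_right hcard (sub_nonneg.2 hab)
    _ = ∑ k ∈ S, volume (I k) := by
        simp [I, Real.volume_Ioo, ENNReal.ofReal_mul]
    _ = volume (⋃ k ∈ S, I k) := (measure_biUnion_finset hdisj fun _ _ => measurableSet_Ioo).symm
    _ ≤ _ := measure_mono hsub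

theorem le_volume_fract_mul_mem_Ioo_inter_closedBall {a b : ℝ} (ha : 0 ≤ a) (hb : b ≤ 1)
    (hab : a ≤ b) {Q r : ℝ} (hQ : 0 < Q) (hQr : 2 ≤ Q * r) (c : ℝ) :
    ENNReal.ofReal ((b - a) * r) ≤
      volume ({t | Int.fract (Q * t) ∈ Ioo a b} ∩ closedBall c r) := by
  have hpre : {t | Int.fract (Q * t) ∈ Ioo a b} ∩ closedBall c r =
      (Q * ·) ⁻¹' ({s | Int.fract s ∈ Ioo a b} ∩ Icc (Q * (c - r)) (Q * (c + r))) := by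
    ext t
    simp [Real.closedBall_eq_Icc, mul_le_mul_iff_right₀ hQ]
  rw [hpre, Real.volume_preimage_mul_left hQ.ne', abs_of_pos (inv_pos.2 hQ)]
  calc ENNReal.ofReal ((b - a) * r)
      ≤ ENNReal.ofReal (Q⁻¹ * ((b - a) * (Q * (c + r) - Q * (c - r) - 2))) := by
        apply ENNReal.ofReal_le_ofReal
        have : Q⁻¹ * ((b - a) * (Q * (c + r) - Q * (c - r) - 2)) =
            (b - a) * (2 * r - 2 / Q) := by
          field_simp; ring
        rw [this]
        have : 2 / Q ≤ r := (div_le_iff₀ hQ).2 (by linarith)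
        exact mul_le_mul_of_nonneg_left (by linarith) (sub_nonneg.2 hab)
    _ = ENNReal.ofReal Q⁻¹ * ENNReal.ofReal ((b - a) * (Q * (c + r) - Q * (c - r) - 2)) :=
        ENNReal.ofReal_mul (inv_nonneg.2 hQ.le)
    _ ≤ _ := by gcongr; exact le_volume_fract_mem_Ioo_inter_Icc ha hb hab _ _

section Box

variable {ι : Type*} [Fintype ι]

def fractBox (Q : ℝ) (a b : ι → ℝ) : Set (ι → ℝ) :=
  {y | ∀ i, Int.fract (Q * y i) ∈ Ioo (a i) (b i)}

theorem measurableSet_fractBox (Q : ℝ) (a b : ι → ℝ) : MeasurableSet (fractBox Q a b) := by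
  rw [fractBox, ofPred_forall]
  exact MeasurableSet.iInter fun i => measurableSet_Ioo.preimage
    (measurable_fract.comp (measurable_const.mul (measurable_pi_apply i)))

theorem le_volume_fractBox_inter_closedBall {a b : ι → ℝ} (ha : ∀ i, 0 ≤ a i)
    (hb : ∀ i, b i ≤ 1) (hab : ∀ i, a i ≤ b i) {Q r : ℝ} (hQ : 0 < Q) (hQr : 2 ≤ Q * r)
    (x : ι → ℝ) :
    ENNReal.ofReal ((∏ i, (b i - a i)) / 2 ^ Fintype.card ι) * volume (closedBall x r) ≤
      volume (fractBox Q a b ∩ closedBall x r) := by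
  have hr : 0 ≤ r := by nlinarith
  have hbox : fractBox Q a b = univ.pi fun i => {t | Int.fract (Q * t) ∈ Ioo (a i) (b i)} := by
    ext y; simp [fractBox]
  have hc : 0 ≤ (∏ i, (b i - a i)) / 2 ^ Fintype.card ι :=
    div_nonneg (Finset.prod_nonneg fun i _ => sub_nonneg.2 (hab i)) (by positivity)
  rw [Real.volume_pi_closedBall x hr, ← ENNReal.ofReal_mul hc, hbox, closedBall_pi x hr,
    ← pi_inter_distrib, volume_pi_pi]
  calc ENNReal.ofReal ((∏ i, (b i - a i)) / 2 ^ Fintype.card ι * (2 * r) ^ Fintype.card ι)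
      = ∏ i, ENNReal.ofReal ((b i - a i) * r) := by
        rw [← ENNReal.ofReal_prod_of_nonneg fun i _ => mul_nonneg (sub_nonneg.2 (hab i)) hr,
          Finset.prod_mul_distrib, Finset.prod_const, Finset.card_univ, mul_pow]
        field_simp
    _ ≤ _ := Finset.prod_le_prod' fun i _ =>
        le_volume_fract_mul_mem_Ioo_inter_closedBall (ha i) (hb i) (hab i) hQ hQr (x i)

theorem ae_frequently_mem_fractBox {q : ℕ → ℕ} (hq : Tendsto q atTop atTop) {a b : ι → ℝ}
    (ha : ∀ i, 0 ≤ a i) (hb : ∀ i, b i ≤ 1) (hab : ∀ i, a i < b i) :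
    ∀ᵐ x : ι → ℝ, ∃ᶠ n in atTop, x ∈ fractBox (q n) a b := by
  have hc : ENNReal.ofReal ((∏ i, (b i - a i)) / 2 ^ Fintype.card ι) ≠ 0 :=
    (ENNReal.ofReal_pos.2 (div_pos (Finset.prod_pos fun i _ => sub_pos.2 (hab i))
      (by positivity))).ne'
  refine ae_frequently_mem_of_frequently_measure_inter_closedBall_ge volume
    (fun n => measurableSet_fractBox _ a b) hc fun x r hr => Eventually.frequently ?_
  filter_upwards [(tendsto_natCast_atTop_atTop.comp hq).eventually_ge_atTop (2 / r)] with n hn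
  have hQ : (0 : ℝ) < q n := (div_pos two_pos hr).trans_le hn
  exact le_volume_fractBox_inter_closedBall ha hb (fun i => (hab i).le) hQ
    ((div_le_iff₀ hr).1 hn) x

end Box

theorem nearestIntDist_nonneg (a : ℝ) : 0 ≤ nearestIntDist a :=
  le_min (Int.fract_nonneg a) (sub_nonneg.2 (Int.fract_lt_one a).le)

theorem ae_frequently_fract_near_half_and_near_int {q : ℕ → ℕ} (hq : Tendsto q atTop atTop)
    {ι : Type*} [Fintype ι] [DecidableEq ι] (i' : ι) {ε : ℝ} (hε : 0 < ε) (hε' : ε ≤ 1 / 2) :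
    ∀ᵐ x : ι → ℝ, ∃ᶠ n in atTop, |Int.fract ((q n : ℝ) * x i') - 1 / 2| < ε ∧
      ∀ i, i ≠ i' → nearestIntDist ((q n : ℝ) * x i) < ε := by
  have hbox := ae_frequently_mem_fractBox hq
    (a := fun i => if i = i' then 1 / 2 - ε else 0) (b := fun i => if i = i' then 1 / 2 + ε else ε)
    (fun i => by split_ifs <;> linarith) (fun i => by split_ifs <;> linarith)
    (fun i => by split_ifs <;> linarith)
  filter_upwards [hbox] with x hx
  refine hx.mono fun n hn => ⟨?_, fun i hi => ?_⟩
  · have := hn i'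
    simp only [if_pos, mem_Ioo] at this
    exact abs_sub_lt_iff.2 ⟨by linarith [this.2], by linarith [this.1]⟩
  · have := hn i
    simp only [if_neg hi, mem_Ioo] at this
    exact (min_le_left _ _).trans_lt this.2

theorem stmt_8_general (q : ℕ → ℕ) (hq' : Tendsto q atTop atTop)
    (N : ℕ) :
    ∀ᵐ x : Fin N → ℝ, ∀ i' : Fin N, ∃ φ : ℕ → ℕ, StrictMono φ ∧
      Tendsto (fun j => Int.fract ((q (φ j) : ℝ) * x i')) atTop (nhds (1 / 2)) ∧
      ∀ i : Fin N, i ≠ i' →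
        Tendsto (fun j => nearestIntDist ((q (φ j) : ℝ) * x i)) atTop (nhds 0) := by
  have hae := ae_all_iff.2 fun i' : Fin N => ae_all_iff.2 fun k : ℕ =>
    ae_frequently_fract_near_half_and_near_int hq' i' (ε := 1 / ((k : ℝ) + 2)) (by positivity)
      (one_div_le_one_div_of_le two_pos (by linarith [k.cast_nonneg' (α := ℝ)]))
  have hε : Tendsto (fun k : ℕ => 1 / ((k : ℝ) + 2)) atTop (𝓝 0) :=
    tendsto_const_nhds.div_atTop (tendsto_atTop_add_const_right _ 2 tendsto_natCast_atTop_atTop)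
  filter_upwards [hae] with x hx i'
  obtain ⟨φ, hφ, hφx⟩ := extraction_forall_of_frequently (hx i')
  refine ⟨φ, hφ, ?_, fun i hi => ?_⟩
  · exact tendsto_iff_dist_tendsto_zero.2
      (squeeze_zero (fun _ => dist_nonneg) (fun j => (hφx j).1.le) hε)
  · exact squeeze_zero (fun _ => nearestIntDist_nonneg _) (fun j => ((hφx j).2 i hi).le) hε

theorem stmt_8 (q : ℕ → ℕ) (hq : ∀ n, 0 < q n) (hq' : Tendsto q atTop atTop)
    (N : ℕ) :
    ∀ᵐ x : Fin N → ℝ, ∀ i' : Fin N, ∃ φ : ℕ → ℕ, StrictMono φ ∧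
      Tendsto (fun j => Int.fract ((q (φ j) : ℝ) * x i')) atTop (nhds (1 / 2)) ∧
      ∀ i : Fin N, i ≠ i' →
        Tendsto (fun j => nearestIntDist ((q (φ j) : ℝ) * x i)) atTop (nhds 0) :=
  stmt_8_general q hq' N
end
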